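/- arXiv:2311.06966 — 5 statements merged into one kernel-verified Lean document; each statement's English description precedes it below -/
import Mathlib

section
/- Let R be a ring of positive characteristic and let x, y be commuting periodic elements of R. Then x + y is periodic. -/
/-!
By the binomial theorem every power of `x + y` is an `ℕ`-linear combination of the finitely
many products `x ^ i * y ^ j`. In characteristic `n > 0` the ring is a `ZMod n`-module, so these
combinations lie in a finitely generated module over a finite ring, which is finite; hence
`x + y` has only finitely many distinct powers.
-/

open Pointwise Submonoid

/-- An element of a ring is periodic if `x ^ n = x ^ m` for some `n > m ≥ 1`. -/
def IsPeriodicElem {R : Type*} [Ring R] (x : R) : Prop :=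
  ∃ n m : ℕ, 1 ≤ m ∧ m < n ∧ x ^ n = x ^ m

theorem Set.Finite.addSubmonoidClosure (A : Type*) {M : Type*} [Semiring A] [Finite A]
    [AddCommMonoid M] [Module A M] {s : Set M} (hs : s.Finite) :
    (AddSubmonoid.closure s : Set M).Finite := by
  have : Module.Finite A (Submodule.span A s) := Module.Finite.span_of_finite A hs
  have : Finite (Submodule.span A s) := Module.finite_of_finite A
  exact (Submodule.span A s : Set M).toFinite.subset
    (AddSubmonoid.closure_le.mpr Submodule.subset_span)

theorem Commute.add_pow_mem_closure_powers_mul_powers {R : Type*} [Semiring R] {x y : R}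
    (h : Commute x y) (k : ℕ) :
    (x + y) ^ k ∈ AddSubmonoid.closure ((powers x : Set R) * (powers y : Set R)) := by
  rw [h.add_pow]
  refine sum_mem fun m _ => ?_
  rw [← nsmul_eq_mul']
  have hmem : x ^ m * y ^ (k - m) ∈ (powers x : Set R) * (powers y : Set R) :=
    Set.mul_mem_mul (pow_mem (mem_powers x) m) (pow_mem (mem_powers y) (k - m))
  exact nsmul_mem (AddSubmonoid.subset_closure hmem) _

section Ring

variable {R : Type*} [Ring R] {x : R}

theorem IsPeriodicElem.finite_powers (hx : IsPeriodicElem x) : (powers x : Set R).Finite := by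
  obtain ⟨a, b, -, hba, hab⟩ := hx
  have hshift : ∀ k, a ≤ k → x ^ k = x ^ (k - (a - b)) := fun k hk => by
    rw [show k = a + (k - a) by omega, pow_add, hab, ← pow_add]
    congr 1
    omega
  rw [coe_powers]
  refine ((Set.finite_Iio a).image (x ^ ·)).subset ?_
  rintro _ ⟨k, rfl⟩
  change x ^ k ∈ (x ^ ·) '' Set.Iio a
  induction k using Nat.strong_induction_on with
  | _ k ih =>
    by_cases hk : k < a
    · exact ⟨k, hk, rfl⟩
    · rw [hshift k (by omega)]
      exact ih _ (by omega)

theorem isPeriodicElem_of_finite_powers (h : (powers x : Set R).Finite) : IsPeriodicElem x := by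
  obtain ⟨m, n, hmn, hpow⟩ :=
    h.exists_lt_map_eq_of_forall_mem (f := fun k : ℕ => x ^ (k + 1))
      fun k => pow_mem (mem_powers x) (k + 1)
  exact ⟨n + 1, m + 1, by omega, by omega, hpow.symm⟩

theorem isPeriodicElem_iff_finite_powers : IsPeriodicElem x ↔ (powers x : Set R).Finite :=
  ⟨IsPeriodicElem.finite_powers, isPeriodicElem_of_finite_powers⟩

end Ring

theorem sum_two_commuting_periodic {R : Type*} [Ring R] (n : ℕ) (hn : 0 < n)
    (hchar : CharP R n) (x y : R) (hcomm : x * y = y * x)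
    (hx : IsPeriodicElem x) (hy : IsPeriodicElem y) :
    IsPeriodicElem (x + y) := by
  have : NeZero n := ⟨hn.ne'⟩
  let := ZMod.algebra R n
  rw [isPeriodicElem_iff_finite_powers] at hx hy ⊢
  refine ((hx.mul hy).addSubmonoidClosure (ZMod n)).subset ?_
  rintro _ ⟨k, rfl⟩
  exact Commute.add_pow_mem_closure_powers_mul_powers hcomm k
end

section
/- Let R be a ring of positive characteristic and k a natural number. If an element x ∈ R can be written as a sum of k pairwise commuting periodic elements of R, then x itself is periodic. -/
/-!
In positive characteristic an element is periodic exactly when it is integral over `ℤ`: a root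
of `X ^ n - X ^ m` is integral, and conversely if `x` is integral then `ℤ[x]` is a finitely
generated abelian group killed by the characteristic, hence finite, so the powers of `x` repeat.
Sums of pairwise commuting integral elements are integral, since they live in the commutative
subalgebra generated by the summands.
-/

namespace IsPeriodicElem

variable {R : Type*} [Ring R]

theorem map {S F : Type*} [Ring S] [FunLike F R S] [MonoidHomClass F R S] (f : F) {x : R}
    (hx : IsPeriodicElem x) : IsPeriodicElem (f x) := by
  obtain ⟨n, m, hm, hmn, h⟩ := hx
  exact ⟨n, m, hm, hmn, by rw [← map_pow, ← map_pow, h]⟩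

theorem of_finite [Finite R] (x : R) : IsPeriodicElem x := by
  obtain ⟨a, b, hab, h⟩ := Finite.exists_ne_map_eq_of_infinite fun m : ℕ => x ^ (m + 1)
  rcases hab.lt_or_gt with hlt | hlt
  · exact ⟨b + 1, a + 1, by omega, by omega, h.symm⟩
  · exact ⟨a + 1, b + 1, by omega, by omega, h⟩

open Polynomial in
theorem isIntegral {x : R} (hx : IsPeriodicElem x) : IsIntegral ℤ x := by
  obtain ⟨n, m, -, hmn, h⟩ := hx
  refine ⟨X ^ n - X ^ m, monic_X_pow_sub (by rw [degree_X_pow]; exact_mod_cast hmn), ?_⟩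
  simp [eval₂_sub, h]

end IsPeriodicElem

theorem IsIntegral.isPeriodicElem {R : Type*} [Ring R] (n : ℕ) [NeZero n] [CharP R n] {x : R}
    (hx : IsIntegral ℤ x) : IsPeriodicElem x := by
  let A := Algebra.adjoin ℤ {x}
  have : Module.Finite ℤ A := Algebra.finite_adjoin_simple_of_isIntegral hx
  have : Finite A := Module.finite_of_fg_torsion A fun y =>
    ⟨⟨n, mem_nonZeroDivisors_of_ne_zero (by exact_mod_cast NeZero.ne n)⟩,
      Subtype.ext (by simp)⟩
  exact (IsPeriodicElem.of_finite (⟨x, Algebra.self_mem_adjoin_singleton ℤ x⟩ : A)).map A.val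

open scoped IsMulCommutative in
theorem IsIntegral.sum_of_commute {R A ι : Type*} [CommRing R] [Ring A] [Algebra R A] [Fintype ι]
    (f : ι → A) (hf : ∀ i, IsIntegral R (f i)) (hcomm : ∀ i j, Commute (f i) (f j)) :
    IsIntegral R (∑ i, f i) := by
  let S := Algebra.adjoin R (Set.range f)
  have : IsMulCommutative S := Algebra.isMulCommutative_adjoin R (by
    rintro _ ⟨i, rfl⟩ _ ⟨j, rfl⟩
    exact hcomm i j)
  let g i : S := ⟨f i, Algebra.subset_adjoin ⟨i, rfl⟩⟩
  have hg i : IsIntegral R (g i) := (isIntegral_algHom_iff S.val Subtype.val_injective).mp (hf i)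
  simpa [g] using (IsIntegral.sum g fun i _ => hg i).map S.val

theorem sum_commuting_periodic {R : Type*} [Ring R] (n : ℕ) (hn : 0 < n)
    (hchar : CharP R n) (k : ℕ) (f : Fin k → R)
    (hper : ∀ i, IsPeriodicElem (f i))
    (hcomm : ∀ i j, f i * f j = f j * f i)
    (x : R) (hx : x = ∑ i, f i) :
    IsPeriodicElem x := by
  have : NeZero n := ⟨hn.ne'⟩
  subst hx
  exact (IsIntegral.sum_of_commute f (fun i => (hper i).isIntegral) hcomm).isPeriodicElem n
end

section
/- Let R be a commutative ring of positive characteristic in which every element is a finite sum of periodic elements. Then R is a periodic ring, i.e., every element x satisfies x^n = x^m for some n > m ≥ 1. -/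
theorem comm_additively_periodic_is_periodic {R : Type*} [CommRing R]
    (n : ℕ) (hn : 0 < n) (hchar : CharP R n)
    (h : ∀ a : R, ∃ l : List R, (∀ x ∈ l, IsPeriodicElem x) ∧ l.sum = a) :
    ∀ x : R, IsPeriodicElem x := by
  intro x
  classical
  rcases subsingleton_or_nontrivial R with hs | hnt
  · exact ⟨2, 1, le_refl 1, one_lt_two, Subsingleton.elim _ _⟩
  haveI := hchar
  haveI : NeZero n := ⟨hn.ne'⟩
  haveI : Fact (1 < n) := ⟨by
    have h1 : n ≠ 1 := CharP.char_ne_one R n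
    omega⟩
  letI : Algebra (ZMod n) R := ZMod.algebra _ _
  obtain ⟨l, hl, hsum⟩ := h x
  -- each periodic element is integral over ZMod n
  have hint : ∀ y ∈ (l.toFinset : Set R), IsIntegral (ZMod n) y := by
    intro y hy
    have hy' : y ∈ l := List.mem_toFinset.mp hy
    obtain ⟨N, M, hM1, hMN, hNM⟩ := hl y hy'
    refine ⟨Polynomial.X ^ N - Polynomial.X ^ M, ?_, ?_⟩
    · apply (Polynomial.monic_X_pow N).sub_of_left
      rw [Polynomial.degree_X_pow, Polynomial.degree_X_pow]
      exact_mod_cast hMN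
    · simp [Polynomial.eval₂_sub, hNM, sub_eq_zero]
  set S := Algebra.adjoin (ZMod n) (l.toFinset : Set R) with hS
  have hfg : (Subalgebra.toSubmodule S).FG :=
    fg_adjoin_of_finite (l.toFinset : Set R).toFinite hint
  haveI : Module.Finite (ZMod n) S :=
    ⟨(Submodule.fg_top _).mpr hfg⟩
  haveI : Finite S := Module.finite_of_finite (ZMod n)
  have hxS : x ∈ S := by
    rw [← hsum]
    exact Subalgebra.list_sum_mem S fun y hy =>
      Algebra.subset_adjoin (List.mem_toFinset.mpr hy)
  obtain ⟨i, j, hij, heq⟩ := Finite.exists_ne_map_eq_of_infinite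
    (fun k : ℕ => (⟨x, hxS⟩ : S) ^ (k + 1))
  have heq' : x ^ (i + 1) = x ^ (j + 1) := by
    have := congrArg (Subtype.val) heq
    simpa using this
  rcases lt_or_gt_of_ne hij with hlt | hlt
  · exact ⟨j + 1, i + 1, by omega, by omega, heq'.symm⟩
  · exact ⟨i + 1, j + 1, by omega, by omega, heq'⟩
end

section
/- Let R be a ring of prime characteristic p and let I be a nil ideal of R. If a ∈ R is such that a + I is periodic in R/I, then a is periodic in R. -/
/-- Lifting periodicity modulo a nil ideal, presented via a surjective ring
homomorphism whose kernel is nil (i.e. `S ≅ R/I` with `I` nil). -/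
theorem periodic_lifts_along_nil_kernel {R S : Type*} [Ring R] [Ring S]
    (p : ℕ) (hp : p.Prime) (hchar : CharP R p)
    (f : R →+* S) (hsurj : Function.Surjective f)
    (hnil : ∀ x : R, f x = 0 → IsNilpotent x)
    (a : R) (ha : IsPeriodicElem (f a)) :
    IsPeriodicElem a := by
  have : Fact p.Prime := ⟨hp⟩
  obtain ⟨n, m, hm1, hmn, hpow⟩ := ha
  obtain ⟨s, hs⟩ := hnil (a ^ n - a ^ m) (by simp [hpow])
  obtain ⟨l, hl⟩ := pow_unbounded_of_one_lt s hp.one_lt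
  have key : a ^ (n * p ^ l) - a ^ (m * p ^ l) = 0 := by
    have hc : Commute (a ^ n) (a ^ m) := (Commute.refl a).pow_pow n m
    calc a ^ (n * p ^ l) - a ^ (m * p ^ l)
        = (a ^ n) ^ p ^ l - (a ^ m) ^ p ^ l := by rw [pow_mul, pow_mul]
      _ = (a ^ n - a ^ m) ^ p ^ l := (sub_pow_char_pow_of_commute p l hc).symm
      _ = (a ^ n - a ^ m) ^ s * (a ^ n - a ^ m) ^ (p ^ l - s) := by
          rw [← pow_add, Nat.add_sub_cancel' hl.le]
      _ = 0 := by rw [hs, zero_mul]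
  refine ⟨n * p ^ l, m * p ^ l, ?_, ?_, sub_eq_zero.mp key⟩
  · exact Nat.mul_pos hm1 (pow_pos hp.pos l)
  · exact (Nat.mul_lt_mul_right (pow_pos hp.pos l)).mpr hmn
end

section
/- Let R be a ring of prime characteristic p, let I be a nil ideal of R, and suppose every element of R/I is a sum of at most k periodic elements. Then every element of R is a sum of at most k + 1 periodic elements. -/
theorem IsNilpotent.isPeriodicElem {R : Type*} [Ring R] {x : R} (h : IsNilpotent x) :
    IsPeriodicElem x := by
  obtain ⟨c, hc⟩ := h
  have hzero : ∀ j, c ≤ j → x ^ j = 0 := fun j hj => pow_eq_zero_of_le hj hc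
  exact ⟨c + 2, c + 1, by omega, by omega, by rw [hzero _ (by omega), hzero _ (by omega)]⟩

theorem IsPeriodicElem.of_isNilpotent_pow_sub_pow {R : Type*} [Ring R] (p : ℕ) [Fact p.Prime]
    [CharP R p] {x : R} {n m : ℕ} (hm : 1 ≤ m) (hmn : m < n) (h : IsNilpotent (x ^ n - x ^ m)) :
    IsPeriodicElem x := by
  obtain ⟨c, hc⟩ := h
  have hpc : 0 < p ^ c := pow_pos (Fact.out : p.Prime).pos c
  have hzero : (x ^ n - x ^ m) ^ p ^ c = 0 :=
    pow_eq_zero_of_le (Nat.lt_pow_self (Fact.out : p.Prime).one_lt).le hc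
  rw [sub_pow_char_pow_of_commute p c (Commute.pow_pow_self x n m), sub_eq_zero] at hzero
  exact ⟨n * p ^ c, m * p ^ c, Nat.mul_pos hm hpc, Nat.mul_lt_mul_of_pos_right hmn hpc,
    by rw [pow_mul, pow_mul, hzero]⟩

theorem IsPeriodicElem.of_map {R S : Type*} [Ring R] [Ring S] (p : ℕ) [Fact p.Prime] [CharP R p]
    (f : R →+* S) (hnil : ∀ x : R, f x = 0 → IsNilpotent x) {x : R}
    (h : IsPeriodicElem (f x)) : IsPeriodicElem x := by
  obtain ⟨n, m, hm, hmn, heq⟩ := h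
  exact .of_isNilpotent_pow_sub_pow p hm hmn (hnil _ (by simp [heq]))

/-- If `R/I` (presented as the image of a surjective ring hom with nil kernel) is
additively `k`-periodic, then `R` is additively `(k+1)`-periodic. -/
theorem additively_k_periodic_lifts {R S : Type*} [Ring R] [Ring S]
    (p : ℕ) (hp : p.Prime) (hchar : CharP R p)
    (f : R →+* S) (hsurj : Function.Surjective f)
    (hnil : ∀ x : R, f x = 0 → IsNilpotent x) (k : ℕ)
    (h : ∀ b : S, ∃ l : List S, l.length ≤ k ∧ (∀ x ∈ l, IsPeriodicElem x) ∧ l.sum = b) :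
    ∀ a : R, ∃ l : List R, l.length ≤ k + 1 ∧ (∀ x ∈ l, IsPeriodicElem x) ∧ l.sum = a := by
  have : Fact p.Prime := ⟨hp⟩
  intro a
  obtain ⟨l, hlen, hper, hsum⟩ := h (f a)
  choose g hg using hsurj
  have hlift : ∀ s ∈ l, IsPeriodicElem (g s) :=
    fun s hs => .of_map p f hnil (by simpa [hg] using hper s hs)
  have hlift_sum : f (l.map g).sum = f a := by
    rw [map_list_sum, List.map_map, show ⇑f ∘ g = id from funext hg, List.map_id, hsum]
  have herror : IsPeriodicElem (a - (l.map g).sum) :=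
    (hnil _ (by rw [map_sub, hlift_sum, sub_self])).isPeriodicElem
  refine ⟨l.map g ++ [a - (l.map g).sum], by simpa using hlen, ?_, by simp⟩
  simpa [or_imp, forall_and] using ⟨hlift, herror⟩
end
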